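/- If I, J, I' are subsets of ℕ₁ with I < J < I' in the Gabriel-Roiter order, and I' starts with I (meaning I = I' or I ≪ I'), then J starts with I. -/
import Mathlib


/-- The Gabriel-Roiter order: `I < J` iff `I ≠ J` and the smallest element of the
symmetric difference belongs to `J`. -/
def grLT (I J : Set ℕ) : Prop := I ≠ J ∧ sInf (symmDiff I J) ∈ J

/-- `I ≪ J` : `I` is a proper subset of `J` and every element of `I` is smaller
than every element of `J \ I`. -/
def grMuchLT (I J : Set ℕ) : Prop := I ⊂ J ∧ ∀ a ∈ I, ∀ b ∈ J \ I, a < b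

/-- `J` starts with `I` iff `I = J` or `I ≪ J`. -/
def startsWith (I J : Set ℕ) : Prop := I = J ∨ grMuchLT I J

/-- If `I < J < I'` in the Gabriel-Roiter order on subsets of `ℕ₁` and `I'` starts
with `I`, then `J` starts with `I`. -/
theorem startsWith_of_between (I J I' : Set ℕ)
    (hI : ∀ x ∈ I, 1 ≤ x) (hJ : ∀ x ∈ J, 1 ≤ x) (hI' : ∀ x ∈ I', 1 ≤ x)
    (h1 : grLT I J) (h2 : grLT J I') (h3 : startsWith I I') :
    startsWith I J := by
  obtain ⟨hne1, hm⟩ := h1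
  obtain ⟨hne2, hn⟩ := h2
  set m := sInf (symmDiff I J) with hmdef
  have hsd1 : (symmDiff I J).Nonempty := by
    rw [Set.nonempty_iff_ne_empty]
    intro h
    exact hne1 (symmDiff_eq_bot.mp h)
  have hmem1 : m ∈ symmDiff I J := Nat.sInf_mem hsd1
  have hmI : m ∉ I := by
    rcases Set.mem_symmDiff.mp hmem1 with ⟨_, h⟩ | ⟨_, h⟩
    · exact absurd hm h
    · exact h
  rcases h3 with rfl | ⟨hsub, hlt⟩
  · -- I = I' : antisymmetry contradiction
    exfalso
    rw [symmDiff_comm] at hn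
    exact hmI hn
  · set n := sInf (symmDiff J I') with hndef
    have hsd2 : (symmDiff J I').Nonempty := by
      rw [Set.nonempty_iff_ne_empty]
      intro h
      exact hne2 (symmDiff_eq_bot.mp h)
    have hmem2 : n ∈ symmDiff J I' := Nat.sInf_mem hsd2
    have hnJ : n ∉ J := by
      rcases Set.mem_symmDiff.mp hmem2 with ⟨_, h⟩ | ⟨_, h⟩
      · exact absurd hn h
      · exact h
    have hIJ : I ⊆ J := by
      intro a ha
      by_contra haJ
      have hma : m ≤ a := Nat.sInf_le (Set.mem_symmDiff.mpr (Or.inl ⟨ha, haJ⟩))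
      have hmlt : m < a := lt_of_le_of_ne hma (fun h => hmI (h ▸ ha))
      have hmI' : m ∉ I' := by
        intro hmI'
        exact absurd (hlt a ha m ⟨hmI', hmI⟩) (not_lt.mpr hma)
      have hnm : n ≤ m := Nat.sInf_le (Set.mem_symmDiff.mpr (Or.inl ⟨hm, hmI'⟩))
      have hnI : n ∈ I := by
        by_contra hnI
        exact absurd (hlt a ha n ⟨hn, hnI⟩) (not_lt.mpr (le_of_lt (lt_of_le_of_lt hnm hmlt)))
      have hmn : m ≤ n := Nat.sInf_le (Set.mem_symmDiff.mpr (Or.inl ⟨hnI, hnJ⟩))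
      have : m = n := le_antisymm hmn hnm
      exact hmI' (this ▸ hn)
    right
    refine ⟨⟨hIJ, fun h => hne1 (le_antisymm hIJ h)⟩, ?_⟩
    intro a ha b hb
    by_cases hbI' : b ∈ I'
    · exact hlt a ha b ⟨hbI', hb.2⟩
    · have hnb : n ≤ b := Nat.sInf_le (Set.mem_symmDiff.mpr (Or.inl ⟨hb.1, hbI'⟩))
      have hnI : n ∉ I := fun h => hnJ (hIJ h)
      exact lt_of_lt_of_le (hlt a ha n ⟨hn, hnI⟩) hnb
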